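/- Let (X, ρ) be a weighted space. A function f : X → ℝ belongs to 𝓑^ρ(X) if and only if the restriction of f to K_R = {x ∈ X : ρ(x) ≤ R} is continuous for every R > 0 and lim_{R→∞} sup_{x ∈ X∖K_R} ρ(x)^{-1} |f(x)| = 0. -/

import Mathlib

open scoped ENNReal NNReal
open Filter Set MeasureTheory TopologicalSpace

noncomputable section

/-- An admissible weight function on a topological space: strictly positive with compact
and separable sublevel sets. -/
structure AdmissibleWeight {X : Type*} [TopologicalSpace X] (ρ : X → ℝ) : Prop where
  pos : ∀ x, 0 < ρ x
  isCompact_sublevel : ∀ R : ℝ, 0 < R → IsCompact {x | ρ x ≤ R}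
  isSeparable_sublevel : ∀ R : ℝ, 0 < R → TopologicalSpace.IsSeparable {x | ρ x ≤ R}

/-- The Banach space of bounded real-valued functions on `X`, with the sup norm. -/
abbrev BddFun (X : Type*) := lp (fun _ : X => ℝ) ∞

/-- Bounded continuous functions, divided by the weight `ρ`.  Under the isometric
identification `f ↦ f / ρ` of `B^ρ(X)` with bounded functions, this is the image of
`C_b(X)`. -/
def preCalB {X : Type*} [TopologicalSpace X] (ρ : X → ℝ) : Submodule ℝ (BddFun X) where
  carrier := {g | ∃ f : X → ℝ, Continuous f ∧ (∃ C, ∀ x, |f x| ≤ C) ∧ ∀ x, g x = f x / ρ x}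
  add_mem' := by
    rintro g₁ g₂ ⟨f₁, hc₁, ⟨C₁, hb₁⟩, h₁⟩ ⟨f₂, hc₂, ⟨C₂, hb₂⟩, h₂⟩
    refine ⟨f₁ + f₂, hc₁.add hc₂, ⟨C₁ + C₂, fun x => ?_⟩, fun x => ?_⟩
    · calc |(f₁ + f₂) x| ≤ |f₁ x| + |f₂ x| := abs_add_le _ _
        _ ≤ C₁ + C₂ := add_le_add (hb₁ x) (hb₂ x)
    · have : (g₁ + g₂ : BddFun X) x = g₁ x + g₂ x := by
        rw [lp.coeFn_add]; rfl
      rw [this, h₁ x, h₂ x]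
      simp [Pi.add_apply, add_div]
  zero_mem' := ⟨0, continuous_const, ⟨0, by simp⟩, fun x => by simp⟩
  smul_mem' := by
    rintro c g ⟨f, hc, ⟨C, hb⟩, h⟩
    refine ⟨fun x => c * f x, continuous_const.mul hc, ⟨|c| * C, fun x => ?_⟩, fun x => ?_⟩
    · rw [abs_mul]
      exact mul_le_mul_of_nonneg_left (hb x) (abs_nonneg c)
    · have : (c • g : BddFun X) x = c * g x := by
        rw [lp.coeFn_smul]; rfl
      rw [this, h x, mul_div_assoc]

/-- `𝓑^ρ(X)`: the closure of (the image of) the bounded continuous functions in `B^ρ(X)`,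
realized under the isometric identification `f ↦ f / ρ` as a closed subspace of the bounded
functions on `X`. -/
def calB {X : Type*} [TopologicalSpace X] (ρ : X → ℝ) : Submodule ℝ (BddFun X) :=
  (preCalB ρ).topologicalClosure

variable {X : Type*} [TopologicalSpace X] {ρ : X → ℝ}

/-- The value at `x` of (the `f/ρ` representation of) an element of `𝓑^ρ(X)`;
this equals `ρ(x)⁻¹ f(x)`. -/
def scaledApp (f : calB ρ) (x : X) : ℝ := (f : BddFun X) x

/-- The true value `f(x)` of an element of `𝓑^ρ(X)`. -/
def valOf (f : calB ρ) (x : X) : ℝ := ρ x * scaledApp f x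

/-- A function `F : X → ℝ` belongs to `𝓑^ρ(X)`. -/
def MemCalB {X : Type*} [TopologicalSpace X] (ρ : X → ℝ) (F : X → ℝ) : Prop :=
  ∃ g : BddFun X, g ∈ calB ρ ∧ ∀ x, g x = F x / ρ x

/-- A generalized Feller semigroup on `𝓑^ρ(X)`. -/
structure IsGenFellerSemigroup {X : Type*} [TopologicalSpace X] (ρ : X → ℝ)
    (P : ℝ≥0 → ((calB ρ) →L[ℝ] (calB ρ))) : Prop where
  map_zero : P 0 = ContinuousLinearMap.id ℝ (calB ρ)
  semigroup : ∀ s t : ℝ≥0, P (s + t) = (P s).comp (P t)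
  tendsto_apply : ∀ (f : calB ρ) (x : X),
    Tendsto (fun t : ℝ≥0 => valOf (P t f) x) (nhds 0) (nhds (valOf f x))
  norm_bound : ∃ (C : ℝ) (ε : ℝ≥0), 0 < ε ∧ ∀ t ≤ ε, ‖P t‖ ≤ C
  pos : ∀ (t : ℝ≥0) (f : calB ρ), (∀ x, 0 ≤ valOf f x) → ∀ x, 0 ≤ valOf (P t f) x


universe u

open Topology

/-!
Both conditions cut out closed subsets of `B^ρ(X)` containing `C_b(X)`: on `K_R` the weighted
norm dominates `R⁻¹` times the uniform norm, so uniform limits stay continuous there, and the decay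
of `ρ⁻¹|f|` as `ρ → ∞` survives uniform limits of `f / ρ`.

Conversely, `ρ` is lower semicontinuous with compact sublevel sets, hence bounded below by some
`δ > 0`. Given `ε`, choose `R` with `|f| ≤ ερ/2` outside `K_R`, and so large that also
`|f| ≤ εR/2` on `K_R`. Approximating `f` on the compact set `K_R` to within `δε` by a continuous
function (Stone–Weierstrass; complete regularity separates the points of `K_R`) and clipping it
at level `εR/2` gives a bounded continuous function within `ε` of `f` in the weighted norm.
-/

theorem AdmissibleWeight.lowerSemicontinuous [T2Space X] (hρ : AdmissibleWeight ρ) :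
    LowerSemicontinuous ρ := by
  refine lowerSemicontinuous_iff_isClosed_preimage.2 fun R => ?_
  rcases lt_or_ge 0 R with hR | hR
  · exact (hρ.isCompact_sublevel R hR).isClosed
  · convert isClosed_empty
    exact eq_empty_of_forall_notMem fun x hx => (hρ.pos x).not_ge (le_trans hx hR)

theorem AdmissibleWeight.exists_pos_le [T2Space X] (hρ : AdmissibleWeight ρ) :
    ∃ δ, 0 < δ ∧ ∀ x, δ ≤ ρ x := by
  rcases isEmpty_or_nonempty X with _ | ⟨⟨x₀⟩⟩
  · exact ⟨1, one_pos, isEmptyElim⟩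
  obtain ⟨a, ha, hmin⟩ :=
    (hρ.lowerSemicontinuous.lowerSemicontinuousOn {x | ρ x ≤ ρ x₀}).exists_isMinOn
      ⟨x₀, le_refl (ρ x₀)⟩ (hρ.isCompact_sublevel _ (hρ.pos x₀))
  refine ⟨ρ a, hρ.pos a, fun x => ?_⟩
  rcases le_total (ρ x) (ρ x₀) with hx | hx
  · exact hmin hx
  · exact le_trans ha hx

theorem IsCompact.exists_continuous_forall_abs_sub_lt [T0Space X] [CompletelyRegularSpace X]
    {K : Set X} (hK : IsCompact K) {f : X → ℝ} (hf : ContinuousOn f K) {ε : ℝ} (hε : 0 < ε) :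
    ∃ g : X → ℝ, Continuous g ∧ ∀ x ∈ K, |g x - f x| < ε := by
  have : CompactSpace K := isCompact_iff_compactSpace.mp hK
  have : T35Space X := ⟨⟩
  let A : Subalgebra ℝ C(K, ℝ) :=
    (ContinuousMap.compRightAlgHom ℝ ℝ ⟨((↑) : K → X), continuous_subtype_val⟩).range
  have hA : A.SeparatesPoints := by
    rintro x y hxy
    obtain ⟨h, hc, hne⟩ :=
      separatesPoints_continuous_of_t35Space (Subtype.coe_injective.ne hxy)
    exact ⟨fun k : K => h k, ⟨_, ⟨⟨h, hc⟩, rfl⟩, rfl⟩, hne⟩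
  obtain ⟨⟨_, g, rfl⟩, hg⟩ :=
    ContinuousMap.exists_mem_subalgebra_near_continuous_of_separatesPoints A hA
      (K.domRestrict f) hf.domRestrict ε hε
  exact ⟨g, g.continuous, fun x hx => hg ⟨x, hx⟩⟩


theorem tendsto_iSup_lt_iff_tendsto_comap {α : Type*} (u : α → ℝ≥0∞) (φ : α → ℝ) :
    Tendsto (fun R : ℝ => ⨆ x : {x // R < φ x}, u x) atTop (𝓝 0) ↔
      Tendsto u (comap φ atTop) (𝓝 0) := by
  simp only [ENNReal.tendsto_nhds_zero, eventually_atTop, eventually_comap, iSup_le_iff,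
    Subtype.forall]
  refine forall₂_congr fun ε _ => ⟨fun ⟨R, hR⟩ => ⟨R + 1, fun _ hb x hx => ?_⟩,
    fun ⟨R, hR⟩ => ⟨R, fun _ hb x hx => hR (φ x) (by linarith) x rfl⟩⟩
  exact hR R le_rfl x (by linarith)

theorem BddFun.abs_sub_le_dist {α : Type*} (g h : BddFun α) (x : α) : |g x - h x| ≤ dist g h := by
  simpa [dist_eq_norm] using lp.norm_apply_le_norm ENNReal.top_ne_zero (g - h) x

theorem BddFun.tendstoUniformly_nhds {α : Type*} (g : BddFun α) :
    TendstoUniformly (fun (h : BddFun α) x => h x) g (𝓝 g) := by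
  refine Metric.tendstoUniformly_iff.2 fun ε hε => ?_
  filter_upwards [Metric.ball_mem_nhds g hε] with h hh x
  exact (BddFun.abs_sub_le_dist g h x).trans_lt (by rwa [dist_comm])

theorem BddFun.isClosed_setOf_continuousOn_mul {α : Type*} [TopologicalSpace α]
    {ρ : α → ℝ} {s : Set α} {C : ℝ} (hC : ∀ x ∈ s, |ρ x| ≤ C) :
    IsClosed {g : BddFun α | ContinuousOn (fun x => ρ x * g x) s} := by
  refine isClosed_iff_frequently.2 fun g hg => TendstoUniformlyOn.continuousOn ?_ hg
  refine Metric.tendstoUniformlyOn_iff.2 fun ε hε => ?_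
  filter_upwards [Metric.tendstoUniformly_iff.1 (BddFun.tendstoUniformly_nhds g) (ε / (|C| + 1))
    (by positivity)] with h hh x hx
  calc dist (ρ x * g x) (ρ x * h x) = |ρ x| * dist (g x) (h x) := by
        rw [Real.dist_eq, Real.dist_eq, ← mul_sub, abs_mul]
    _ ≤ (|C| + 1) * dist (g x) (h x) := by
        gcongr; linarith [hC x hx, le_abs_self C]
    _ < ε := by rw [← lt_div_iff₀' (by positivity)]; exact hh x

theorem BddFun.isClosed_setOf_tendsto_zero {α : Type*} (l : Filter α) :
    IsClosed {g : BddFun α | Tendsto g l (𝓝 0)} := by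
  refine isClosed_of_closure_subset fun g hg => ?_
  have := mem_closure_iff_nhdsWithin_neBot.1 hg
  have hunif : TendstoUniformlyOnFilter (fun (h : BddFun α) x => h x) g
      (𝓝[{g : BddFun α | Tendsto g l (𝓝 0)}] g) l :=
    ((BddFun.tendstoUniformly_nhds g).tendstoUniformlyOnFilter.mono_left
      nhdsWithin_le_nhds).mono_right le_top
  exact hunif.tendsto_of_eventually_tendsto self_mem_nhdsWithin tendsto_const_nhds

theorem calB_subset_of_isClosed {T : Set (BddFun X)} (hT : IsClosed T)
    (h : (preCalB ρ : Set (BddFun X)) ⊆ T) :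
    (calB ρ : Set (BddFun X)) ⊆ T := by
  rw [calB, Submodule.topologicalClosure_coe]
  exact closure_minimal h hT

theorem continuousOn_mul_of_mem_calB (hρ : ∀ x, ρ x ≠ 0) {g : BddFun X} (hg : g ∈ calB ρ)
    {s : Set X} {C : ℝ} (hC : ∀ x ∈ s, |ρ x| ≤ C) : ContinuousOn (fun x => ρ x * g x) s := by
  refine calB_subset_of_isClosed (BddFun.isClosed_setOf_continuousOn_mul hC) ?_ hg
  rintro _ ⟨F, hF, -, hgF⟩
  exact hF.continuousOn.congr fun x _ => by rw [hgF, mul_div_cancel₀ _ (hρ x)]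

theorem tendsto_comap_atTop_of_mem_calB {g : BddFun X} (hg : g ∈ calB ρ) :
    Tendsto g (comap ρ atTop) (𝓝 0) := by
  refine calB_subset_of_isClosed (BddFun.isClosed_setOf_tendsto_zero _) ?_ hg
  rintro _ ⟨F, -, ⟨C, hC⟩, hgF⟩
  have hρ : Tendsto (fun x => |ρ x|) (comap ρ atTop) atTop :=
    tendsto_abs_atTop_atTop.comp tendsto_comap
  show Tendsto _ _ _
  refine squeeze_zero_norm (fun x => ?_) ((tendsto_const_nhds (x := C)).div_atTop hρ)
  rw [hgF, Real.norm_eq_abs, abs_div]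
  exact div_le_div_of_nonneg_right (hC x) (abs_nonneg _)

theorem memℓp_div_of_abs_le {α : Type*} {ρ F : α → ℝ} {δ a b : ℝ} (hδ : 0 < δ)
    (hρδ : ∀ x, δ ≤ ρ x) (hF : ∀ x, |F x| ≤ a * ρ x + b) : Memℓp (fun x => F x / ρ x) ∞ := by
  refine memℓp_infty ⟨a + |b| / δ, ?_⟩
  rintro _ ⟨x, rfl⟩
  have hρx : 0 < ρ x := hδ.trans_le (hρδ x)
  have hb : b ≤ |b| / δ * ρ x :=
    calc b ≤ |b| / δ * δ := by rw [div_mul_cancel₀ _ hδ.ne']; exact le_abs_self b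
      _ ≤ |b| / δ * ρ x := by gcongr; exact hρδ x
  show ‖F x / ρ x‖ ≤ _
  rw [Real.norm_eq_abs, abs_div, abs_of_pos hρx, div_le_iff₀ hρx]
  linarith [hF x]

theorem BddFun.norm_sub_le_of_abs_sub_le_mul {α : Type*} {ρ F G : α → ℝ} (hρ : ∀ x, 0 < ρ x)
    {g h : BddFun α} (hg : ∀ x, g x = F x / ρ x) (hh : ∀ x, h x = G x / ρ x) {ε : ℝ}
    (hε : 0 ≤ ε) (hFG : ∀ x, |F x - G x| ≤ ε * ρ x) : ‖g - h‖ ≤ ε := by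
  refine lp.norm_le_of_forall_le hε fun x => ?_
  rw [lp.coeFn_sub, Pi.sub_apply, hg, hh, ← sub_div, Real.norm_eq_abs, abs_div,
    abs_of_pos (hρ x), div_le_iff₀ (hρ x)]
  exact hFG x

theorem AdmissibleWeight.memCalB_of_forall_approx [T2Space X] (hρ : AdmissibleWeight ρ)
    {f : X → ℝ} (happrox : ∀ ε > 0, ∃ F : X → ℝ, Continuous F ∧ (∃ C, ∀ x, |F x| ≤ C) ∧
      ∀ x, |f x - F x| ≤ ε * ρ x) :
    MemCalB ρ f := by
  obtain ⟨δ, hδ, hρδ⟩ := hρ.exists_pos_le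
  obtain ⟨F₁, -, ⟨C₁, hC₁⟩, hF₁⟩ := happrox 1 one_pos
  have hf : Memℓp (fun x => f x / ρ x) ∞ := memℓp_div_of_abs_le hδ hρδ (a := 1) (b := C₁)
    fun x => by linarith [abs_sub_abs_le_abs_sub (f x) (F₁ x), hF₁ x, hC₁ x]
  refine ⟨⟨_, hf⟩, ?_, fun x => rfl⟩
  rw [calB, ← SetLike.mem_coe, Submodule.topologicalClosure_coe, Metric.mem_closure_iff]
  intro ε hε
  obtain ⟨F, hFc, ⟨C, hC⟩, hF⟩ := happrox (ε / 2) (half_pos hε)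
  have hF' : Memℓp (fun x => F x / ρ x) ∞ :=
    memℓp_div_of_abs_le hδ hρδ (a := 0) (b := C) fun x => by simpa using hC x
  refine ⟨⟨_, hF'⟩, ⟨F, hFc, ⟨C, hC⟩, fun x => rfl⟩, ?_⟩
  rw [dist_eq_norm]
  exact (BddFun.norm_sub_le_of_abs_sub_le_mul hρ.pos (fun x => rfl) (fun x => rfl)
    (half_pos hε).le hF).trans_lt (half_lt_self hε)

theorem eventually_abs_le_mul_of_tendsto_div {α : Type*} {ρ f : α → ℝ} (hρ : ∀ x, 0 < ρ x)
    (hf : Tendsto (fun x => f x / ρ x) (comap ρ atTop) (𝓝 0)) {ε : ℝ} (hε : 0 < ε) :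
    ∀ᶠ R in atTop, ∀ x, R < ρ x → |f x| ≤ ε * ρ x := by
  obtain ⟨R₀, hR₀⟩ := eventually_atTop.1
    (eventually_comap.1 (hf.eventually (Metric.closedBall_mem_nhds 0 hε)))
  filter_upwards [eventually_ge_atTop R₀] with R hR x hx
  have := hR₀ (ρ x) (by linarith) x rfl
  rwa [dist_zero_right, Real.norm_eq_abs, abs_div, abs_of_pos (hρ x),
    div_le_iff₀ (hρ x)] at this

theorem AdmissibleWeight.eventually_abs_le_mul_on_sublevel (hρ : AdmissibleWeight ρ)
    {f : X → ℝ} (hcont : ∀ R, 0 < R → ContinuousOn f {x | ρ x ≤ R}) {ε : ℝ} (hε : 0 < ε)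
    (htail : ∀ᶠ R in atTop, ∀ x, R < ρ x → |f x| ≤ ε * ρ x) :
    ∀ᶠ R in atTop, ∀ x, ρ x ≤ R → |f x| ≤ ε * R := by
  obtain ⟨R₁, hR₁, hR₁pos⟩ := (htail.and (eventually_gt_atTop 0)).exists
  obtain ⟨M, hM⟩ :=
    (hρ.isCompact_sublevel R₁ hR₁pos).exists_bound_of_continuousOn (hcont R₁ hR₁pos)
  filter_upwards [eventually_ge_atTop R₁, eventually_ge_atTop (M / ε)] with R hR hRM x hx
  rcases le_or_gt (ρ x) R₁ with hx₁ | hx₁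
  · calc |f x| ≤ M := by simpa using hM x hx₁
      _ ≤ ε * R := (div_le_iff₀' hε).1 hRM
  · exact (hR₁ x hx₁).trans (by gcongr)

theorem AdmissibleWeight.exists_continuous_bounded_approx [T2Space X] [CompletelyRegularSpace X]
    (hρ : AdmissibleWeight ρ) {f : X → ℝ} (hcont : ∀ R, 0 < R → ContinuousOn f {x | ρ x ≤ R})
    (hdecay : Tendsto (fun x => f x / ρ x) (comap ρ atTop) (𝓝 0)) {ε : ℝ} (hε : 0 < ε) :
    ∃ F : X → ℝ, Continuous F ∧ (∃ C, ∀ x, |F x| ≤ C) ∧ ∀ x, |f x - F x| ≤ ε * ρ x := by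
  obtain ⟨δ, hδ, hρδ⟩ := hρ.exists_pos_le
  have htail := eventually_abs_le_mul_of_tendsto_div hρ.pos hdecay (half_pos hε)
  obtain ⟨R, ⟨hRtail, hRsub⟩, hR⟩ := ((htail.and (hρ.eventually_abs_le_mul_on_sublevel hcont
    (half_pos hε) htail)).and (eventually_gt_atTop 0)).exists
  obtain ⟨G, hGc, hG⟩ := (hρ.isCompact_sublevel _ hR).exists_continuous_forall_abs_sub_lt
    (hcont _ hR) (mul_pos hδ hε)
  have hc : -(ε / 2 * R) ≤ ε / 2 * R := neg_le_self (by positivity)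
  let clip := projIcc (-(ε / 2 * R)) (ε / 2 * R) hc
  refine ⟨fun x => clip (G x), continuous_subtype_val.comp (continuous_projIcc.comp hGc),
    ⟨ε / 2 * R, fun x => abs_le.2 (clip (G x)).2⟩, fun x => ?_⟩
  rcases le_or_gt (ρ x) R with hx | hx
  · have hfx : (clip (f x) : ℝ) = f x :=
      congrArg Subtype.val (projIcc_of_mem hc (abs_le.1 (hRsub x hx)))
    calc |f x - clip (G x)| = |(clip (f x) : ℝ) - clip (G x)| := by rw [hfx]
      _ ≤ |f x - G x| := abs_projIcc_sub_projIcc hc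
      _ ≤ δ * ε := by rw [abs_sub_comm]; exact (hG x hx).le
      _ ≤ ε * ρ x := by rw [mul_comm]; gcongr; exact hρδ x
  · calc |f x - clip (G x)| ≤ |f x| + |(clip (G x) : ℝ)| := abs_sub _ _
      _ ≤ ε / 2 * ρ x + ε / 2 * R := add_le_add (hRtail x hx) (abs_le.2 (clip (G x)).2)
      _ ≤ ε * ρ x := by nlinarith

/-- Characterization of membership in `𝓑^ρ(X)`: continuity on the compact sublevel sets `K_R`
together with decay of `ρ⁻¹|f|` outside of `K_R` as `R → ∞`. -/
theorem mem_calB_iff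
    {X : Type u} [TopologicalSpace X] [T2Space X] [CompletelyRegularSpace X]
    {ρ : X → ℝ} (hρ : AdmissibleWeight ρ) (f : X → ℝ) :
    MemCalB ρ f ↔
      ((∀ R : ℝ, 0 < R → ContinuousOn f {x | ρ x ≤ R}) ∧
        Tendsto (fun R : ℝ => ⨆ x : {x : X // R < ρ x}, ENNReal.ofReal (|f x.1| / ρ x.1))
          atTop (nhds 0)) := by
  have hρ0 : ∀ x, ρ x ≠ 0 := fun x => (hρ.pos x).ne'
  have henorm : ∀ x, ENNReal.ofReal (|f x| / ρ x) = ‖f x / ρ x‖ₑ := fun x => by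
    rw [Real.enorm_eq_ofReal_abs, abs_div, abs_of_pos (hρ.pos x)]
  simp only [henorm]
  rw [tendsto_iSup_lt_iff_tendsto_comap (fun x => ‖f x / ρ x‖ₑ),
    ← tendsto_zero_iff_enorm_tendsto_zero]
  constructor
  · rintro ⟨g, hg, hgf⟩
    have hfg : ∀ x, ρ x * g x = f x := fun x => by rw [hgf, mul_div_cancel₀ _ (hρ0 x)]
    refine ⟨fun R _ => ?_, ?_⟩
    · exact (continuousOn_mul_of_mem_calB hρ0 hg (C := R)
        fun x hx => (abs_of_pos (hρ.pos x)).trans_le hx).congr fun x _ => (hfg x).symm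
    · simpa only [show ⇑g = fun x => f x / ρ x from funext hgf] using
        tendsto_comap_atTop_of_mem_calB hg
  · rintro ⟨hcont, hdecay⟩
    exact hρ.memCalB_of_forall_approx fun ε hε =>
      hρ.exists_continuous_bounded_approx hcont hdecay hε

end
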